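/- For |q|<1, one has ∑_{n≥1} q^{(2n-1)(n-1)}/((1+q^{2n})·(-q;q)_{2n-2}) = 1 − q·∑_{n≥1} q^{2n²-n}/(-q;q)_{2n}. -/

import Mathlib

open scoped BigOperators

/-- The finite q-Pochhammer symbol `(a;q)_n = ∏_{j=0}^{n-1} (1 - a q^j)`. -/
noncomputable def qPoch (a q : ℂ) (n : ℕ) : ℂ := ∏ j ∈ Finset.range n, (1 - a * q ^ j)

/-!
Put `u n = q^{n(2n+1)} / (-q;q)_{2n}` (`evenTriangularTerm`). Since
`(-q;q)_{2n+2} = (-q;q)_{2n} (1+q^{2n+1}) (1+q^{2n+2})`, the `n`-th term on the left plus `q` times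
the `n`-th term on the right equals `u n - u (n+1)`: both sides are
`u n (1 + q^{2n+1} + q^{2n+2}) / ((1+q^{2n+1})(1+q^{2n+2}))`. As `u 0 = 1` and `u n → 0`, the
series telescope to `1`. Convergence comes from `‖(-q;q)_m‖ ≥ (1-‖q‖)^m`, which makes every term
`O(‖q‖^{n^2} (1-‖q‖)^{-2n})`.
-/

open Filter Topology

lemma qPoch_succ (a q : ℂ) (n : ℕ) : qPoch a q (n + 1) = qPoch a q n * (1 - a * q ^ n) :=
  Finset.prod_range_succ _ _

lemma one_sub_norm_pow_le_norm_qPoch {a q : ℂ} (ha : ‖a‖ ≤ 1) (hq : ‖q‖ ≤ 1) (m : ℕ) :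
    (1 - ‖a‖) ^ m ≤ ‖qPoch a q m‖ := by
  rw [qPoch, norm_prod]
  calc (1 - ‖a‖) ^ m = ∏ _j ∈ Finset.range m, (1 - ‖a‖) := by simp
    _ ≤ _ := Finset.prod_le_prod (fun _ _ => by linarith) fun j _ => ?_
  have hfactor : ‖a * q ^ j‖ ≤ ‖a‖ := by
    rw [norm_mul, norm_pow]
    exact mul_le_of_le_one_right (norm_nonneg a) (pow_le_one₀ (norm_nonneg q) hq)
  linarith [norm_sub_norm_le (1 : ℂ) (a * q ^ j), norm_one (α := ℂ)]

lemma qPoch_ne_zero {a q : ℂ} (ha : ‖a‖ < 1) (hq : ‖q‖ ≤ 1) (m : ℕ) : qPoch a q m ≠ 0 :=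
  norm_pos_iff.mp <| (pow_pos (by linarith) m).trans_le
    (one_sub_norm_pow_le_norm_qPoch ha.le hq m)

lemma summable_pow_sq_mul_pow {x : ℝ} (hx₀ : 0 ≤ x) (hx₁ : x < 1) (y : ℝ) :
    Summable fun n : ℕ => x ^ (n ^ 2) * y ^ n := by
  obtain ⟨N, hN⟩ : ∃ N : ℕ, x ^ N * ‖y‖ < 1 := by
    have : Tendsto (fun N : ℕ => x ^ N * ‖y‖) atTop (𝓝 (0 * ‖y‖)) :=
      (tendsto_pow_atTop_nhds_zero_of_lt_one hx₀ hx₁).mul_const _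
    rw [zero_mul] at this
    exact (this.eventually (gt_mem_nhds one_pos)).exists
  refine Summable.of_norm_bounded_eventually_nat
    (summable_geometric_of_lt_one (by positivity) hN) ?_
  filter_upwards [eventually_ge_atTop N] with n hn
  calc ‖x ^ (n ^ 2) * y ^ n‖ = (x ^ n) ^ n * ‖y‖ ^ n := by
        rw [norm_mul, norm_pow, norm_pow, Real.norm_of_nonneg hx₀, sq, pow_mul]
    _ ≤ (x ^ N) ^ n * ‖y‖ ^ n := by
        gcongr ?_ * _
        exact pow_le_pow_left₀ (by positivity) (pow_le_pow_of_le_one hx₀ hx₁.le hn) n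
    _ = (x ^ N * ‖y‖) ^ n := (mul_pow _ _ _).symm

lemma summable_pow_sq_div_pow {x c : ℝ} (hx₀ : 0 ≤ x) (hx₁ : x < 1) (hc : c ≠ 0) :
    Summable fun n : ℕ => x ^ (n ^ 2) / c ^ (2 * n + 2) := by
  refine ((summable_pow_sq_mul_pow hx₀ hx₁ (c ^ 2)⁻¹).mul_left (c ^ 2)⁻¹).congr fun n => ?_
  rw [pow_add, pow_mul, inv_pow]
  field_simp

lemma summable_pow_div_qPoch {q : ℂ} (hq : ‖q‖ < 1) {e d : ℕ → ℕ} (he : ∀ n, n ^ 2 ≤ e n)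
    (hd : ∀ n, d n ≤ 2 * n + 2) : Summable fun n => q ^ e n / qPoch (-q) q (d n) := by
  have hx : 0 < 1 - ‖q‖ := by linarith
  refine (summable_pow_sq_div_pow (norm_nonneg q) hq hx.ne').of_norm_bounded fun n => ?_
  rw [norm_div, norm_pow]
  refine div_le_div₀ (by positivity) (pow_le_pow_of_le_one (norm_nonneg q) hq.le (he n))
    (by positivity) ?_
  calc (1 - ‖q‖) ^ (2 * n + 2) ≤ (1 - ‖q‖) ^ d n :=
        pow_le_pow_of_le_one hx.le (by linarith [norm_nonneg q]) (hd n)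
    _ ≤ ‖qPoch (-q) q (d n)‖ := by
        simpa using one_sub_norm_pow_le_norm_qPoch (a := -q) (by simpa using hq.le) hq.le (d n)

lemma hasSum_sub_succ {G : Type*} [AddCommGroup G] [TopologicalSpace G]
    [IsTopologicalAddGroup G] [T2Space G] {u : ℕ → G} (hs : Summable fun n => u n - u (n + 1))
    (hu : Tendsto u atTop (𝓝 0)) : HasSum (fun n => u n - u (n + 1)) (u 0) := by
  rw [hs.hasSum_iff_tendsto_nat]
  simp_rw [Finset.sum_range_sub']
  simpa using tendsto_const_nhds.sub hu

lemma qPoch_neg_two_mul_succ (q : ℂ) (n : ℕ) :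
    qPoch (-q) q (2 * (n + 1)) =
      qPoch (-q) q (2 * n) * (1 + q ^ (2 * n + 1)) * (1 + q ^ (2 * (n + 1))) := by
  rw [show 2 * (n + 1) = 2 * n + 1 + 1 by ring, qPoch_succ, qPoch_succ]
  ring

noncomputable def evenTriangularTerm (q : ℂ) (n : ℕ) : ℂ :=
  q ^ ((2 * n + 1) * n) / qPoch (-q) q (2 * n)

lemma evenTriangularTerm_sub_succ {q : ℂ} (n : ℕ) (hP : qPoch (-q) q (2 * (n + 1)) ≠ 0) :
    evenTriangularTerm q n - evenTriangularTerm q (n + 1) =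
      q ^ ((2 * n + 1) * n) / ((1 + q ^ (2 * (n + 1))) * qPoch (-q) q (2 * n))
        + q * (q ^ (2 * (n + 1) ^ 2 - (n + 1)) / qPoch (-q) q (2 * (n + 1))) := by
  rw [qPoch_neg_two_mul_succ] at hP ⊢
  obtain ⟨⟨hP₀, h₁⟩, h₂⟩ := mul_ne_zero_iff.mp hP |>.imp_left mul_ne_zero_iff.mp
  have hsucc : (2 * (n + 1) + 1) * (n + 1) = (2 * n + 1) * n + (4 * n + 3) := by ring
  have hsq : 2 * (n + 1) ^ 2 - (n + 1) = (2 * n + 1) * n + (2 * n + 1) := by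
    rw [Nat.sub_eq_iff_eq_add (by nlinarith)]; ring
  rw [evenTriangularTerm, evenTriangularTerm, qPoch_neg_two_mul_succ, hsucc, hsq]
  field_simp
  ring

/-- For |q|<1,
`∑_{n≥1} q^{(2n-1)(n-1)}/((1+q^{2n})(-q;q)_{2n-2}) = 1 - q ∑_{n≥1} q^{2n²-n}/(-q;q)_{2n}`. -/
theorem stmt_8 (q : ℂ) (hq : ‖q‖ < 1) :
    ∑' n : ℕ, q ^ ((2 * n + 1) * n) / ((1 + q ^ (2 * (n + 1))) * qPoch (-q) q (2 * n))
      = 1 - q * ∑' n : ℕ, q ^ (2 * (n + 1) ^ 2 - (n + 1)) / qPoch (-q) q (2 * (n + 1)) := by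
  have hP (m : ℕ) : qPoch (-q) q m ≠ 0 := qPoch_ne_zero (by simpa using hq) hq.le m
  have hu : Summable (evenTriangularTerm q) :=
    summable_pow_div_qPoch hq (fun n => by nlinarith) (fun n => by omega)
  have hR : Summable fun n : ℕ => q ^ (2 * (n + 1) ^ 2 - (n + 1)) / qPoch (-q) q (2 * (n + 1)) :=
    summable_pow_div_qPoch hq (fun n => Nat.le_sub_of_add_le (by nlinarith)) (fun n => by omega)
  have htel : HasSum (fun n => evenTriangularTerm q n - evenTriangularTerm q (n + 1)) 1 := by
    simpa [evenTriangularTerm, qPoch] using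
      hasSum_sub_succ (hu.sub (hu.comp_injective (add_left_injective 1))) hu.tendsto_atTop_zero
  simp_rw [evenTriangularTerm_sub_succ _ (hP _)] at htel
  rw [← tsum_mul_left, ← (htel.sub (hR.mul_left q).hasSum).tsum_eq]
  simp only [add_sub_cancel_right]
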